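/- Let (X,d) be a Heine–Borel metric space, p ≥ 1, μ ∈ P_p(X), k ∈ ℕ, and R ⊆ X closed, with k ≤ #(R ∩ supp(μ)). Then (μ,k,R) is non-singular: the optimal values satisfy m_{1,p}(μ,R) > m_{2,p}(μ,R) > ⋯ > m_{k,p}(μ,R), where m_{j,p}(μ,R) := inf{∫ min_{x∈S} d(x,y)^p dμ(y) : S ⊆ R, 1 ≤ #S ≤ j}. -/

import Mathlib

open Filter MeasureTheory Topology TopologicalSpace Metric Set

noncomputable section

/-- Kuratowski lower limit of a sequence of sets. -/
def KurLi {Y : Type*} [TopologicalSpace Y] (A : ℕ → Set Y) : Set Y :=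
  {x | ∀ U ∈ nhds x, ∀ᶠ n in atTop, (U ∩ A n).Nonempty}

/-- Kuratowski upper limit of a sequence of sets. -/
def KurLs {Y : Type*} [TopologicalSpace Y] (A : ℕ → Set Y) : Set Y :=
  {x | ∀ U ∈ nhds x, ∃ᶠ n in atTop, (U ∩ A n).Nonempty}

variable {X : Type*} [MetricSpace X] [MeasurableSpace X]

/-- The clustering cost `W_p(S,μ) = ∫ d(y,S)^p dμ(y)`. -/
def Wp (p : ℝ) (S : Set X) (μ : Measure X) : ℝ :=
  ∫ y, infDist y S ^ p ∂μ

/-- `μ` has a finite `p`-th moment. -/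
def FinMom (p : ℝ) (μ : Measure X) : Prop :=
  ∃ x : X, Integrable (fun y => dist x y ^ p) μ

/-- Convergence in the `p`-Wasserstein topology: weak convergence together with
convergence of the `p`-th moments about some point. -/
def WassTendsto (p : ℝ) (μ : ℕ → Measure X) (ν : Measure X) : Prop :=
  (∀ f : BoundedContinuousFunction X ℝ,
      Tendsto (fun n => ∫ y, f y ∂ μ n) atTop (𝓝 (∫ y, f y ∂ ν))) ∧
  ∃ x : X, Tendsto (fun n => ∫ y, dist x y ^ p ∂ μ n) atTop (𝓝 (∫ y, dist x y ^ p ∂ ν))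

/-- `S` is a feasible set of cluster centers: a nonempty finite subset of `R`
with at most `k` points. -/
def Feas (k : ℕ) (R S : Set X) : Prop :=
  S ⊆ R ∧ S.Finite ∧ S.Nonempty ∧ S.ncard ≤ k

/-- The optimal clustering cost `m_{k,p}(μ,R)`. -/
def mCost (p : ℝ) (μ : Measure X) (k : ℕ) (R : Set X) : ℝ :=
  sInf ((fun S => Wp p S μ) '' {S | Feas k R S})

/-- The set of optimal cluster-center sets `C_p(μ,k,R)`, viewed as a subset of the
hyperspace of nonempty compact subsets of `X` with the Hausdorff metric. -/
def Cp (p : ℝ) (μ : Measure X) (k : ℕ) (R : Set X) : Set (NonemptyCompacts X) :=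
  {S | Feas k R (S : Set X) ∧ ∀ T : Set X, Feas k R T → Wp p (S : Set X) μ ≤ Wp p T μ}

/-- The support of a measure on a metric space. -/
def measSupp (μ : Measure X) : Set X :=
  {x | ∀ r : ℝ, 0 < r → μ (Metric.ball x r) ≠ 0}

/-! Pick `j + 1` points of `R ∩ supp μ`; they are `r`-separated for some `r > 0`. By pigeonhole,
any `j` centers leave one of these points, `x`, at distance `≥ r / 2` from all of them. Adding `x`
as a center lowers `d(y, S)^p` by at least `(r/3)^p - (r/6)^p` for every `y` in the ball
`B(x, r/6)`, whose mass is bounded below uniformly over the finitely many candidates `x`, since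
they lie in the support. Hence `m_{j+1} ≤ m_j - δ` for a `δ > 0` independent of the `j` centers. -/

open scoped NNReal ENNReal

theorem Real.add_rpow_le_two_rpow_mul_rpow_add_rpow {p a b : ℝ} (ha : 0 ≤ a) (hb : 0 ≤ b)
    (hp : 0 ≤ p) : (a + b) ^ p ≤ 2 ^ p * (a ^ p + b ^ p) := by
  lift a to ℝ≥0 using ha
  lift b to ℝ≥0 using hb
  have := ENNReal.add_rpow_le_two_rpow_mul_rpow_add_rpow (a : ℝ≥0∞) b hp
  rw [← ENNReal.coe_add, ← ENNReal.coe_rpow_of_nonneg _ hp, ← ENNReal.coe_rpow_of_nonneg _ hp,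
    ← ENNReal.coe_rpow_of_nonneg _ hp, ← ENNReal.coe_ofNat, ← ENNReal.coe_rpow_of_nonneg _ hp]
    at this
  exact_mod_cast this

section Separation

variable {Y : Type*} [MetricSpace Y]

theorem Set.Finite.exists_pos_pairwise_le_dist {F : Set Y} (hF : F.Finite) :
    ∃ r > 0, F.Pairwise fun a b => r ≤ dist a b := by
  set pairs := {q : Y × Y | q.1 ∈ F ∧ q.2 ∈ F ∧ q.1 ≠ q.2}
  have hpairs : pairs.Finite := (hF.prod hF).subset fun q hq => ⟨hq.1, hq.2.1⟩
  have : ∀ᶠ r in 𝓝[>] (0 : ℝ), ∀ q ∈ pairs, r ≤ dist q.1 q.2 :=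
    (eventually_all_finite hpairs).2 fun q hq =>
      nhdsWithin_le_nhds (eventually_le_nhds (dist_pos.2 hq.2.2))
  obtain ⟨r, hr, hr0⟩ := (this.and self_mem_nhdsWithin).exists
  exact ⟨r, hr0, fun a ha b hb hab => hr (a, b) ⟨ha, hb, hab⟩⟩

theorem exists_mem_forall_half_le_dist_of_ncard_lt {F S : Set Y} {r : ℝ}
    (hF : F.Pairwise fun a b => r ≤ dist a b) (hS : S.Finite) (hSF : S.ncard < F.ncard) :
    ∃ x ∈ F, ∀ s ∈ S, r / 2 ≤ dist x s := by
  by_contra! hnear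
  choose! f hfS hfdist using hnear
  obtain ⟨a, ha, b, hb, hab, hfab⟩ := Set.exists_ne_map_eq_of_ncard_lt_of_maps_to hSF hfS hS
  have : dist a b < r := calc
    dist a b ≤ dist a (f a) + dist b (f b) := by rw [hfab, dist_comm b]; exact dist_triangle _ _ _
    _ < r / 2 + r / 2 := add_lt_add (hfdist a ha) (hfdist b hb)
    _ = r := add_halves r
  exact (hF ha hb hab).not_gt this

theorem indicator_ball_le_infDist_rpow_sub_insert {p ρ : ℝ} {S : Set Y} {x y : Y} (hp : 0 ≤ p)
    (hS : S.Nonempty) (hx : ∀ s ∈ S, 3 * ρ ≤ dist x s) :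
    (ball x ρ).indicator (fun _ => (2 * ρ) ^ p - ρ ^ p) y ≤
      infDist y S ^ p - infDist y (insert x S) ^ p := by
  by_cases hy : y ∈ ball x ρ
  · rw [indicator_of_mem hy]
    have hyx : dist y x < ρ := hy
    have hnear : infDist y (insert x S) ≤ ρ :=
      (infDist_le_dist_of_mem (mem_insert x S)).trans hyx.le
    have hfar : 2 * ρ ≤ infDist y S := by
      refine (le_infDist hS).2 fun s hs => ?_
      linarith [hx s hs, dist_triangle x y s, dist_comm x y]
    have hρ : 0 ≤ ρ := dist_nonneg.trans hyx.le
    exact sub_le_sub (Real.rpow_le_rpow (by positivity) hfar hp)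
      (Real.rpow_le_rpow infDist_nonneg hnear hp)
  · rw [indicator_of_notMem hy, sub_nonneg]
    exact Real.rpow_le_rpow infDist_nonneg
      (infDist_le_infDist_of_subset (subset_insert x S) hS) hp

end Separation

section Clustering

variable {p : ℝ} {μ : Measure X} {k : ℕ} {R S : Set X}

theorem FinMom.integrable_dist_rpow [OpensMeasurableSpace X] [IsFiniteMeasure μ] (hp : 0 ≤ p)
    (hμ : FinMom p μ) (x₀ : X) : Integrable (fun y => dist x₀ y ^ p) μ := by
  obtain ⟨x, hx⟩ := hμ
  refine (((integrable_const (dist x₀ x ^ p)).add hx).const_mul (2 ^ p)).mono'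
    ((continuous_const.dist continuous_id).rpow_const fun _ => Or.inr hp).aestronglyMeasurable
    (Eventually.of_forall fun y => ?_)
  rw [Real.norm_of_nonneg (Real.rpow_nonneg dist_nonneg p)]
  calc dist x₀ y ^ p ≤ (dist x₀ x + dist x y) ^ p := by gcongr; exact dist_triangle _ _ _
    _ ≤ 2 ^ p * (dist x₀ x ^ p + dist x y ^ p) :=
      Real.add_rpow_le_two_rpow_mul_rpow_add_rpow dist_nonneg dist_nonneg hp

theorem FinMom.integrable_infDist_rpow [OpensMeasurableSpace X] [IsFiniteMeasure μ] (hp : 0 ≤ p)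
    (hμ : FinMom p μ) (hS : S.Nonempty) : Integrable (fun y => infDist y S ^ p) μ := by
  obtain ⟨s, hs⟩ := hS
  refine (hμ.integrable_dist_rpow hp s).mono'
    ((continuous_infDist_pt S).rpow_const fun _ => Or.inr hp).aestronglyMeasurable
    (Eventually.of_forall fun y => ?_)
  rw [Real.norm_of_nonneg (Real.rpow_nonneg infDist_nonneg p), dist_comm]
  exact Real.rpow_le_rpow infDist_nonneg (infDist_le_dist_of_mem hs) hp

theorem Wp_nonneg : 0 ≤ Wp p S μ :=
  integral_nonneg fun _ => Real.rpow_nonneg infDist_nonneg p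

theorem mCost_le_Wp (hS : Feas k R S) : mCost p μ k R ≤ Wp p S μ :=
  csInf_le ⟨0, by rintro _ ⟨T, -, rfl⟩; exact Wp_nonneg⟩ ⟨S, hS, rfl⟩

theorem le_mCost {a : ℝ} (hne : ∃ S, Feas k R S) (h : ∀ S, Feas k R S → a ≤ Wp p S μ) :
    a ≤ mCost p μ k R := by
  obtain ⟨S, hS⟩ := hne
  exact le_csInf ⟨_, S, hS, rfl⟩ (by rintro _ ⟨T, hT, rfl⟩; exact h T hT)

theorem measureReal_ball_mul_le_Wp_sub_Wp_insert [OpensMeasurableSpace X] [IsFiniteMeasure μ]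
    {x : X} {ρ : ℝ} (hp : 0 ≤ p) (hμ : FinMom p μ) (hS : S.Nonempty)
    (hx : ∀ s ∈ S, 3 * ρ ≤ dist x s) :
    μ.real (ball x ρ) * ((2 * ρ) ^ p - ρ ^ p) ≤ Wp p S μ - Wp p (insert x S) μ := by
  have hIS := hμ.integrable_infDist_rpow hp hS
  have hIxS := hμ.integrable_infDist_rpow hp (insert_nonempty x S)
  rw [← smul_eq_mul, ← integral_indicator_const _ measurableSet_ball, Wp, Wp,
    ← integral_sub hIS hIxS]
  exact integral_mono ((integrable_const _).indicator measurableSet_ball) (hIS.sub hIxS)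
    fun y => indicator_ball_le_infDist_rpow_sub_insert hp hS hx

theorem exists_pos_mCost_succ_add_le_Wp [OpensMeasurableSpace X] [IsFiniteMeasure μ] (hp : 0 < p)
    (hμ : FinMom p μ) {F : Set X} (hFR : F ⊆ R ∩ measSupp μ) {j : ℕ} (hjF : j < F.ncard) :
    ∃ δ > 0, ∀ S, Feas j R S → mCost p μ (j + 1) R + δ ≤ Wp p S μ := by
  have hF : F.Finite := finite_of_ncard_pos (j.zero_le.trans_lt hjF)
  obtain ⟨r, hr, hFr⟩ := hF.exists_pos_pairwise_le_dist
  set ρ := r / 6 with hρr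
  have hρ : 0 < ρ := by positivity
  obtain ⟨x₀, hx₀F, hx₀min⟩ := exists_min_image F (fun x => μ.real (ball x ρ)) hF
    (nonempty_of_ncard_ne_zero (by omega))
  have hmass : 0 < μ.real (ball x₀ ρ) :=
    ENNReal.toReal_pos ((hFR hx₀F).2 ρ hρ) (measure_ne_top μ _)
  have hgain : 0 < (2 * ρ) ^ p - ρ ^ p :=
    sub_pos.2 (Real.rpow_lt_rpow hρ.le (by linarith) hp)
  refine ⟨μ.real (ball x₀ ρ) * ((2 * ρ) ^ p - ρ ^ p), mul_pos hmass hgain, ?_⟩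
  rintro S ⟨hSR, hSfin, hSne, hSj⟩
  obtain ⟨x, hxF, hxS⟩ := exists_mem_forall_half_le_dist_of_ncard_lt hFr hSfin (by omega)
  have hfeas : Feas (j + 1) R (insert x S) :=
    ⟨insert_subset (hFR hxF).1 hSR, hSfin.insert x, insert_nonempty x S,
      (ncard_insert_le x S).trans (by omega)⟩
  calc mCost p μ (j + 1) R + μ.real (ball x₀ ρ) * ((2 * ρ) ^ p - ρ ^ p)
      ≤ Wp p (insert x S) μ + μ.real (ball x ρ) * ((2 * ρ) ^ p - ρ ^ p) := by
        gcongr ?_ + ?_ * _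
        exacts [mCost_le_Wp hfeas, hx₀min x hxF]
    _ ≤ Wp p S μ := by
        have := measureReal_ball_mul_le_Wp_sub_Wp_insert (x := x) (ρ := ρ) hp.le hμ hSne
          fun s hs => by linarith [hxS s hs, hρr]
        linarith

end Clustering

theorem stmt11_general {X : Type*} [MetricSpace X] [MeasurableSpace X] [BorelSpace X]
    (p : ℝ) (hp : 1 ≤ p) (μ : Measure X) [IsProbabilityMeasure μ] (hμ : FinMom p μ)
    (k : ℕ) (R : Set X)
    (hk : (k : ℕ∞) ≤ (R ∩ measSupp μ).encard) :
    ∀ j : ℕ, 1 ≤ j → j < k → mCost p μ (j + 1) R < mCost p μ j R := by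
  intro j hj1 hjk
  obtain ⟨F, hFR, hFcard⟩ := exists_subset_encard_eq ((Nat.cast_le.2 hjk).trans hk)
  have hjF : j < F.ncard := by
    rw [ncard_def, hFcard]
    exact Nat.lt_succ_self j
  obtain ⟨δ, hδ, hδS⟩ := exists_pos_mCost_succ_add_le_Wp (by linarith) hμ hFR hjF
  obtain ⟨x, hxF⟩ := nonempty_of_ncard_ne_zero (by omega : F.ncard ≠ 0)
  have hfeas : Feas j R {x} :=
    ⟨singleton_subset_iff.2 (hFR hxF).1, finite_singleton x, singleton_nonempty x,
      (ncard_singleton x).trans_le hj1⟩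
  linarith [le_mCost ⟨{x}, hfeas⟩ hδS]

/-- If `k ≤ #(R ∩ supp μ)`, then `(μ,k,R)` is non-singular: the optimal clustering costs
strictly decrease, `m_{1,p}(μ,R) > m_{2,p}(μ,R) > ⋯ > m_{k,p}(μ,R)`. -/
theorem stmt11 {X : Type*} [MetricSpace X] [ProperSpace X] [MeasurableSpace X] [BorelSpace X]
    (p : ℝ) (hp : 1 ≤ p) (μ : Measure X) [IsProbabilityMeasure μ] (hμ : FinMom p μ)
    (k : ℕ) (R : Set X) (hRc : IsClosed R)
    (hk : (k : ℕ∞) ≤ (R ∩ measSupp μ).encard) :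
    ∀ j : ℕ, 1 ≤ j → j < k → mCost p μ (j + 1) R < mCost p μ j R :=
  stmt11_general p hp μ hμ k R hk
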